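/- Let I be a nonzero ideal of S. For each n ≥ 1, let G_n be the reduced Gröbner base for the ideal I ∩ S⟨n⟩ inside the polynomial ring S⟨n⟩. Then the set Ḡ = ⋃_{m=1}^{∞} ( ⋂_{n=m}^{∞} G_n ) is the reduced Gröbner base for I. -/

import Mathlib

open MvPolynomial

noncomputable section

/-- `r` is a monomial order on the monomials (finitely supported exponent vectors):
a well-order compatible with multiplication.  Here `r a b` means `x^a < x^b`. -/
def IsMonomialOrder {σ : Type*} (r : (σ →₀ ℕ) → (σ →₀ ℕ) → Prop) : Prop :=
  IsWellOrder (σ →₀ ℕ) r ∧ ∀ a b c : σ →₀ ℕ, r a b → r (c + a) (c + b)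

/-- `m` is the leading monomial of the polynomial `f` with respect to the order `r`. -/
def IsLM {σ k : Type*} [CommSemiring k] (r : (σ →₀ ℕ) → (σ →₀ ℕ) → Prop)
    (f : MvPolynomial σ k) (m : σ →₀ ℕ) : Prop :=
  m ∈ f.support ∧ ∀ m' ∈ f.support, m' ≠ m → r m' m

/-- `t` is the leading term of `f` with respect to `r`. -/
def IsLT {σ k : Type*} [CommSemiring k] (r : (σ →₀ ℕ) → (σ →₀ ℕ) → Prop)
    (f t : MvPolynomial σ k) : Prop :=
  ∃ m, IsLM r f m ∧ t = monomial m (f.coeff m)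

/-- The initial ideal of `I`: the ideal generated by the leading terms of nonzero elements. -/
def initialIdeal {σ k : Type*} [CommSemiring k] (r : (σ →₀ ℕ) → (σ →₀ ℕ) → Prop)
    (I : Ideal (MvPolynomial σ k)) : Ideal (MvPolynomial σ k) :=
  Ideal.span {t | ∃ f ∈ I, f ≠ 0 ∧ IsLT r f t}

/-- The set of leading monomials (as polynomials) of the nonzero members of `G`: `in(G)`. -/
def lmMonomials {σ k : Type*} [CommSemiring k] (r : (σ →₀ ℕ) → (σ →₀ ℕ) → Prop)
    (G : Set (MvPolynomial σ k)) : Set (MvPolynomial σ k) :=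
  {t | ∃ m, (∃ g ∈ G, g ≠ 0 ∧ IsLM r g m) ∧ t = monomial m 1}

/-- `G ⊆ I` is a Gröbner base for `I`: the leading monomials of members of `G`
generate the initial ideal of `I`. -/
def IsGroebnerBasis {σ k : Type*} [CommSemiring k] (r : (σ →₀ ℕ) → (σ →₀ ℕ) → Prop)
    (G : Set (MvPolynomial σ k)) (I : Ideal (MvPolynomial σ k)) : Prop :=
  G ⊆ ↑I ∧ Ideal.span (lmMonomials r G) = initialIdeal r I

/-- `S⟨n⟩ = k[x₀, …, xₙ₋₁]`, the subalgebra of polynomials in the first `n` variables. -/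
def Sn (k : Type*) [CommSemiring k] (n : ℕ) : Subalgebra k (MvPolynomial ℕ k) :=
  MvPolynomial.supported k {i | i < n}

/-- The initial ideal of an ideal `J` of `S⟨n⟩`, computed inside `S⟨n⟩`
(with the restricted monomial order). -/
def initialIdealIn {k : Type*} [CommSemiring k] (r : (ℕ →₀ ℕ) → (ℕ →₀ ℕ) → Prop)
    (n : ℕ) (J : Ideal ↥(Sn k n)) : Ideal ↥(Sn k n) :=
  Ideal.span {t | ∃ f ∈ J, f ≠ 0 ∧ IsLT r (f : MvPolynomial ℕ k) (t : MvPolynomial ℕ k)}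

/-- The ideal `I ∩ S⟨n⟩` of `S⟨n⟩`. -/
def interIdeal {k : Type*} [CommSemiring k] (I : Ideal (MvPolynomial ℕ k)) (n : ℕ) :
    Ideal ↥(Sn k n) :=
  Ideal.comap (Sn k n).subtype I

/-- A subset `G` of `S` lying in `S⟨n⟩` is a Gröbner base for the ideal `J` of `S⟨n⟩`. -/
def IsGroebnerBasisIn {k : Type*} [CommSemiring k] (r : (ℕ →₀ ℕ) → (ℕ →₀ ℕ) → Prop)
    (n : ℕ) (G : Set (MvPolynomial ℕ k)) (J : Ideal ↥(Sn k n)) : Prop :=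
  (∀ g ∈ G, ∃ hg : g ∈ Sn k n, (⟨g, hg⟩ : ↥(Sn k n)) ∈ J) ∧
  Ideal.span {t : ↥(Sn k n) | ∃ m, (∃ g ∈ G, g ≠ 0 ∧ IsLM r g m) ∧
      (t : MvPolynomial ℕ k) = monomial m 1} = initialIdealIn r n J

/-- `f'` is a remainder of `f` on division by `G` with respect to the order `r`. -/
def IsRemainder {σ k : Type*} [CommSemiring k] (r : (σ →₀ ℕ) → (σ →₀ ℕ) → Prop)
    (G : Set (MvPolynomial σ k)) (f f' : MvPolynomial σ k) : Prop :=
  (∃ (s : ℕ) (g q : Fin s → MvPolynomial σ k),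
    (∀ i, g i ∈ G) ∧
    f = (∑ i, q i * g i) + f' ∧
    ∀ i, q i * g i ≠ 0 → ∀ m m', IsLM r (q i * g i) m → IsLM r f m' → m = m' ∨ r m m') ∧
  ∀ m ∈ f'.support, (monomial m 1 : MvPolynomial σ k) ∉ Ideal.span (lmMonomials r G)

/-- `G` is a reduced Gröbner base for `I`: every member is monic and no leading monomial
of a member divides any term of another member. -/
def IsReducedGB {σ k : Type*} [CommSemiring k] (r : (σ →₀ ℕ) → (σ →₀ ℕ) → Prop)
    (G : Set (MvPolynomial σ k)) (I : Ideal (MvPolynomial σ k)) : Prop :=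
  IsGroebnerBasis r G I ∧
  (∀ g ∈ G, ∃ m, IsLM r g m ∧ MvPolynomial.coeff m g = 1) ∧
  (∀ g ∈ G, ∀ h ∈ G, g ≠ h → ∀ m, IsLM r g m → ∀ m' ∈ h.support, ¬ m ≤ m')

/-- A regular sequence indexed by an ordered set `(Ω, lt)`. -/
def IsRegularSeq {R : Type*} [CommRing R] {Ω : Type*} (lt : Ω → Ω → Prop) (f : Ω → R) : Prop :=
  Ideal.span (Set.range f) ≠ ⊤ ∧
  ∀ α : Ω, ∀ h : R, h * f α ∈ Ideal.span (f '' {β | lt β α}) →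
    h ∈ Ideal.span (f '' {β | lt β α})

/-- The FR-condition: every finite strictly increasing subfamily is a regular sequence
in this order. -/
def SatisfiesFR {R : Type*} [CommRing R] {Ω : Type*} (lt : Ω → Ω → Prop) (f : Ω → R) : Prop :=
  ∀ (n : ℕ) (α : Fin n → Ω), (∀ i j : Fin n, i < j → lt (α i) (α j)) →
    IsRegularSeq (· < ·) (fun i => f (α i))

/-- `G` is a reduced Gröbner base for the ideal `J` of `S⟨n⟩`. -/
def IsReducedGBIn {k : Type*} [Field k] (r : (ℕ →₀ ℕ) → (ℕ →₀ ℕ) → Prop)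
    (n : ℕ) (G : Set (MvPolynomial ℕ k)) (J : Ideal ↥(Sn k n)) : Prop :=
  IsGroebnerBasisIn r n G J ∧
  (∀ g ∈ G, ∃ m, IsLM r g m ∧ MvPolynomial.coeff m g = 1) ∧
  (∀ g ∈ G, ∀ h ∈ G, g ≠ h → ∀ m, IsLM r g m → ∀ m' ∈ h.support, ¬ m ≤ m')

/-!
Given a leading monomial `m` of `I`, pick a leading monomial `d ≤ m` of `I` that is minimal for
divisibility, and let `g` be `x^d` minus its normal form modulo `I` (computed with Mathlib's
division algorithm for the `MonomialOrder` defined by `r`); all monomials of `g` other than `d`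
are standard for `I`. For `n` large, `g ∈ S⟨n⟩` and `d` is a leading monomial of `I ∩ S⟨n⟩`, so `Gₙ`
has a member whose leading monomial divides `d`, hence equals `d` by minimality. Its other monomials
are standard for `I ∩ S⟨n⟩` because `Gₙ` is reduced, so its difference with `g`, which lies in
`I ∩ S⟨n⟩`, has no leading monomial and vanishes. Thus `g ∈ Gₙ` for all large `n`, i.e. `g ∈ Ḡ`;
membership in `I`, monicity and reducedness pass from the `Gₙ` to `Ḡ`.
-/

open Filter

theorem IsLM.ne_zero {σ R : Type*} [CommSemiring R] {r : (σ →₀ ℕ) → (σ →₀ ℕ) → Prop}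
    {f : MvPolynomial σ R} {m : σ →₀ ℕ} (h : IsLM r f m) : f ≠ 0 := by
  rintro rfl
  simp [IsLM] at h

namespace IsMonomialOrder

variable {σ R : Type*} [CommSemiring R] {r : (σ →₀ ℕ) → (σ →₀ ℕ) → Prop}

theorem zero_rel_of_ne_zero (hr : IsMonomialOrder r) {c : σ →₀ ℕ} (hc : c ≠ 0) : r 0 c := by
  have := hr.1
  rcases trichotomous_of r 0 c with h | h | h
  · exact h
  · exact absurd h.symm hc
  · -- `r c 0` would make `n • c` a strictly decreasing sequence
    obtain ⟨_, ⟨n, rfl⟩, hmin⟩ :=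
      (IsWellFounded.wf (r := r)).has_min (Set.range (· • c)) ⟨0, 0, zero_nsmul c⟩
    exact (hmin _ ⟨n + 1, rfl⟩ (by simpa [succ_nsmul] using hr.2 c 0 (n • c) h)).elim

theorem rel_of_le_of_ne (hr : IsMonomialOrder r) {a b : σ →₀ ℕ} (h : a ≤ b) (hne : a ≠ b) :
    r a b := by
  obtain ⟨c, rfl⟩ := exists_add_of_le h
  simpa using hr.2 0 c a (hr.zero_rel_of_ne_zero (by rintro rfl; simp at hne))

def toMonomialOrder (hr : IsMonomialOrder r) : MonomialOrder σ :=
  have := hr.1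
  let order : LinearOrder (σ →₀ ℕ) := @linearOrderOfSTO _ r _ (Classical.decRel r)
  { syn := σ →₀ ℕ
    linearOrderSyn := order
    toSyn := AddEquiv.refl _
    isOrderedAddMonoid_syn := @IsOrderedAddMonoid.mk _ _ order.toPreorder
      (fun a b hab c => hab.imp (congrArg (· + c)) fun h => by
        simpa only [add_comm _ c] using hr.2 a b c h)
      (fun a b hab c => hab.imp (congrArg (c + ·)) (hr.2 a b c))
    toSyn_monotone := fun a b hab => (eq_or_ne a b).imp id (hr.rel_of_le_of_ne hab)
    wellFoundedLT_syn := ⟨IsWellFounded.wf (r := r)⟩ }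

theorem isLM_degree (hr : IsMonomialOrder r) {f : MvPolynomial σ R} (hf : f ≠ 0) :
    IsLM r f (hr.toMonomialOrder.degree f) :=
  ⟨hr.toMonomialOrder.degree_mem_support hf, fun _ hs hne =>
    lt_of_le_of_ne (hr.toMonomialOrder.le_degree hs) (hr.toMonomialOrder.toSyn.injective.ne hne)⟩

theorem eq_degree_of_isLM (hr : IsMonomialOrder r) {f : MvPolynomial σ R} {m : σ →₀ ℕ}
    (h : IsLM r f m) : m = hr.toMonomialOrder.degree f := by
  by_contra hne
  exact (hr.toMonomialOrder.le_degree h.1).not_gt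
    (h.2 _ (hr.isLM_degree h.ne_zero).1 (Ne.symm hne))

theorem isLM_unique (hr : IsMonomialOrder r) {f : MvPolynomial σ R} {m m' : σ →₀ ℕ}
    (h : IsLM r f m) (h' : IsLM r f m') : m = m' :=
  (hr.eq_degree_of_isLM h).trans (hr.eq_degree_of_isLM h').symm

end IsMonomialOrder

section LeadingMonomials

variable {σ k : Type*} {r : (σ →₀ ℕ) → (σ →₀ ℕ) → Prop}

def leadingMonomials [CommSemiring k] (r : (σ →₀ ℕ) → (σ →₀ ℕ) → Prop)
    (J : Set (MvPolynomial σ k)) : Set (σ →₀ ℕ) :=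
  {m | ∃ f ∈ J, IsLM r f m}

theorem leadingMonomials_mono [CommSemiring k] {J J' : Set (MvPolynomial σ k)} (h : J ⊆ J') :
    leadingMonomials r J ⊆ leadingMonomials r J' :=
  fun _ ⟨f, hf, hfm⟩ => ⟨f, h hf, hfm⟩

theorem lmMonomials_eq_image [CommSemiring k] (G : Set (MvPolynomial σ k)) :
    lmMonomials r G = (fun m => monomial m 1) '' leadingMonomials r G := by
  ext t
  simp only [lmMonomials, leadingMonomials, Set.mem_image, Set.mem_ofPred_eq]
  constructor
  · rintro ⟨m, ⟨g, hg, -, hgm⟩, rfl⟩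
    exact ⟨m, ⟨g, hg, hgm⟩, rfl⟩
  · rintro ⟨m, ⟨g, hg, hgm⟩, rfl⟩
    exact ⟨m, ⟨g, hg, hgm.ne_zero, hgm⟩, rfl⟩

theorem eq_of_sub_mem_of_coeff_eq [CommRing k] (hr : IsMonomialOrder r)
    {J : Set (MvPolynomial σ k)} {g g' : MvPolynomial σ k} {d : σ →₀ ℕ} (hJ : g - g' ∈ J)
    (hd : g.coeff d = g'.coeff d) (hg : ∀ s ∈ g.support, s ≠ d → s ∉ leadingMonomials r J)
    (hg' : ∀ s ∈ g'.support, s ≠ d → s ∉ leadingMonomials r J) : g = g' := by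
  classical
  by_contra hne
  have hlm := hr.isLM_degree (sub_ne_zero.2 hne)
  set s := hr.toMonomialOrder.degree (g - g')
  have hsd : s ≠ d := by
    intro hsd
    exact mem_support_iff.1 hlm.1 (by rw [hsd, coeff_sub, hd, sub_self])
  rcases Finset.mem_union.1 (support_sub σ g g' hlm.1) with hs | hs
  · exact hg s hs hsd ⟨_, hJ, hlm⟩
  · exact hg' s hs hsd ⟨_, hJ, hlm⟩

variable [Field k]

theorem isGroebnerBasis_of_forall_exists_le {G : Set (MvPolynomial σ k)}
    {I : Ideal (MvPolynomial σ k)} (hGI : G ⊆ I)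
    (hlm : ∀ m ∈ leadingMonomials r (I : Set (MvPolynomial σ k)),
      ∃ g ∈ G, ∃ d, IsLM r g d ∧ d ≤ m) :
    IsGroebnerBasis r G I := by
  refine ⟨hGI, le_antisymm (Ideal.span_le.2 ?_) (Ideal.span_le.2 ?_)⟩
  · rintro _ ⟨m, ⟨g, hg, hg0, hgm⟩, rfl⟩
    have hc : g.coeff m ≠ 0 := mem_support_iff.1 hgm.1
    have hlt : monomial m (g.coeff m) ∈ initialIdeal r I :=
      Ideal.subset_span ⟨g, hGI hg, hg0, m, hgm, rfl⟩
    rw [SetLike.mem_coe, ← inv_mul_cancel₀ hc, ← smul_eq_mul, ← smul_monomial]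
    exact Submodule.smul_of_tower_mem _ _ hlt
  · rintro _ ⟨f, hf, -, m, hfm, rfl⟩
    obtain ⟨g, hg, d, hgd, hdm⟩ := hlm m ⟨f, hf, hfm⟩
    have hd : monomial d 1 ∈ Ideal.span (lmMonomials r G) :=
      Ideal.subset_span ⟨d, ⟨g, hg, hgd.ne_zero, hgd⟩, rfl⟩
    have hsplit : monomial m (f.coeff m) = monomial (m - d) (f.coeff m) * monomial d 1 := by
      rw [monomial_mul, mul_one, tsub_add_cancel_of_le hdm]
    rw [SetLike.mem_coe, hsplit]
    exact Ideal.mul_mem_left _ _ hd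

theorem exists_sub_mem_forall_not_le (hr : IsMonomialOrder r) (I : Ideal (MvPolynomial σ k))
    (f : MvPolynomial σ k) :
    ∃ v, f - v ∈ I ∧ ∀ s ∈ v.support, ∀ l ∈ leadingMonomials r (I : Set (MvPolynomial σ k)),
      ¬ l ≤ s := by
  let m := hr.toMonomialOrder
  obtain ⟨q, v, hf, -, hv⟩ := m.div_set (B := (I : Set _) \ {0})
    (fun b hb => (m.leadingCoeff_ne_zero_iff.2 hb.2).isUnit) f
  refine ⟨v, ?_, fun s hs l ⟨b, hbI, hbl⟩ => ?_⟩
  · rw [hf, add_sub_cancel_right]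
    refine Submodule.span_le.2 ?_
      (by rw [← Finsupp.range_linearCombination]; exact LinearMap.mem_range_self _ q)
    rintro _ ⟨b, rfl⟩
    exact b.2.1
  · rw [hr.eq_degree_of_isLM hbl]
    exact hv s hs b ⟨hbI, hbl.ne_zero⟩

/-- The witness is `x^d` minus its normal form modulo `I`. -/
theorem exists_coeff_eq_one_forall_notMem (hr : IsMonomialOrder r) (I : Ideal (MvPolynomial σ k))
    {d : σ →₀ ℕ} (hd : d ∈ leadingMonomials r (I : Set (MvPolynomial σ k))) :
    ∃ g ∈ I, g.coeff d = 1 ∧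
      ∀ s ∈ g.support, s ≠ d → s ∉ leadingMonomials r (I : Set (MvPolynomial σ k)) := by
  classical
  obtain ⟨v, hvI, hv⟩ := exists_sub_mem_forall_not_le hr I (monomial d 1)
  have hdv : d ∉ v.support := fun h => hv d h d hd le_rfl
  refine ⟨_, hvI, by rw [coeff_sub, coeff_monomial, if_pos rfl, notMem_support_iff.1 hdv,
    sub_zero], fun s hs hsd hsI => ?_⟩
  rcases Finset.mem_union.1 (support_sub σ _ v hs) with hs | hs
  · exact hsd (Finset.mem_singleton.1 (support_monomial_subset hs))
  · exact hv s hs s hsI le_rfl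

end LeadingMonomials

theorem MvPolynomial.monomial_mem_supported_of_mem_support {σ R : Type*} [CommSemiring R]
    {s : Set σ} {f : MvPolynomial σ R} (hf : f ∈ supported R s) {m : σ →₀ ℕ}
    (hm : m ∈ f.support) (c : R) : monomial m c ∈ supported R s := by
  classical
  rw [mem_supported] at hf ⊢
  refine subset_trans (fun i hi => ?_) hf
  obtain ⟨d, hd, hid⟩ := (mem_vars_iff_mem_support i).1 hi
  rw [Finset.mem_singleton.1 (support_monomial_subset hd)] at hid
  exact (mem_vars_iff_mem_support i).2 ⟨m, hm, hid⟩

theorem eventually_mem_Sn {k : Type*} [CommSemiring k] (f : MvPolynomial ℕ k) :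
    ∀ᶠ n in atTop, f ∈ Sn k n :=
  eventually_atTop.2 ⟨f.vars.sup id + 1, fun _ hn => mem_supported.2 fun _ hi =>
    lt_of_lt_of_le (Nat.lt_succ_of_le (Finset.le_sup (f := id) hi)) hn⟩

theorem image_val_interIdeal {k : Type*} [CommSemiring k] (I : Ideal (MvPolynomial ℕ k))
    (n : ℕ) : Subtype.val '' (interIdeal I n : Set (Sn k n)) = (I : Set _) ∩ Sn k n := by
  rw [Set.inter_comm]
  exact Subtype.image_preimage_coe _ _

theorem Set.mem_iUnion_iInter_iff_eventually {α : Type*} {G : ℕ → Set α} {x : α} :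
    x ∈ ⋃ m : ℕ, ⋃ (_ : 1 ≤ m), ⋂ n : ℕ, ⋂ (_ : m ≤ n), G n ↔ ∀ᶠ n in atTop, x ∈ G n := by
  simp only [Set.mem_iUnion, Set.mem_iInter, eventually_atTop, exists_prop]
  exact ⟨fun ⟨m, _, hm⟩ => ⟨m, hm⟩,
    fun ⟨m, hm⟩ => ⟨max m 1, le_max_right _ _, fun n hn => hm n (le_of_max_le_left hn)⟩⟩

section GroebnerBasesInFirstVariables

variable {k : Type*} [Field k] {r : (ℕ →₀ ℕ) → (ℕ →₀ ℕ) → Prop} {n : ℕ}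
  {G : Set (MvPolynomial ℕ k)}

theorem mem_inter_of_isGroebnerBasisIn {I : Ideal (MvPolynomial ℕ k)}
    (hG : IsGroebnerBasisIn r n G (interIdeal I n)) {g : MvPolynomial ℕ k} (hg : g ∈ G) :
    g ∈ (I : Set _) ∩ Sn k n := by
  obtain ⟨hgn, hgJ⟩ := hG.1 g hg
  rw [← image_val_interIdeal]
  exact ⟨⟨g, hgn⟩, hgJ, rfl⟩

theorem exists_isLM_le_of_isGroebnerBasisIn {J : Ideal (Sn k n)}
    (hG : IsGroebnerBasisIn r n G J) {s : ℕ →₀ ℕ}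
    (hs : s ∈ leadingMonomials r (Subtype.val '' (J : Set (Sn k n)))) :
    ∃ g ∈ G, ∃ l, IsLM r g l ∧ l ≤ s := by
  obtain ⟨_, ⟨f, hfJ, rfl⟩, hfs⟩ := hs
  have hc : (f : MvPolynomial ℕ k).coeff s ≠ 0 := mem_support_iff.1 hfs.1
  have hlt : (⟨monomial s ((f : MvPolynomial ℕ k).coeff s),
      monomial_mem_supported_of_mem_support f.2 hfs.1 _⟩ : Sn k n) ∈ initialIdealIn r n J :=
    Ideal.subset_span ⟨f, hfJ, fun h => hfs.ne_zero (congrArg Subtype.val h), s, hfs, rfl⟩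
  rw [← hG.2] at hlt
  have hmap := Ideal.mem_map_of_mem (Sn k n).val hlt
  rw [Ideal.map_span] at hmap
  replace hmap := Ideal.span_mono (s := _) (t := lmMonomials r G)
    (by rintro _ ⟨t, ⟨l, hl, ht⟩, rfl⟩; exact ⟨l, hl, ht⟩) hmap
  rw [lmMonomials_eq_image] at hmap
  obtain ⟨l, ⟨g, hg, hgl⟩, hls⟩ :=
    mem_ideal_span_monomial_image.1 hmap s (by simp [hc])
  exact ⟨g, hg, l, hgl, hls⟩

theorem notMem_leadingMonomials_of_isReducedGBIn (hr : IsMonomialOrder r) {J : Ideal (Sn k n)}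
    (hG : IsReducedGBIn r n G J) {g : MvPolynomial ℕ k} (hg : g ∈ G) {d : ℕ →₀ ℕ}
    (hd : IsLM r g d) {s : ℕ →₀ ℕ} (hs : s ∈ g.support) (hsd : s ≠ d) :
    s ∉ leadingMonomials r (Subtype.val '' (J : Set (Sn k n))) := by
  intro hsJ
  obtain ⟨u, hu, l, hul, hls⟩ := exists_isLM_le_of_isGroebnerBasisIn hG.1 hsJ
  by_cases hug : u = g
  · subst hug
    obtain rfl := hr.isLM_unique hul hd
    have := hr.1
    exact asymm (hd.2 s hs hsd) (hr.rel_of_le_of_ne hls hsd.symm)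
  · exact hG.2.2 u hu g hg hug l hul s hs hls

theorem mem_and_isLM_of_isReducedGBIn (hr : IsMonomialOrder r) {I : Ideal (MvPolynomial ℕ k)}
    (hG : IsReducedGBIn r n G (interIdeal I n)) {d : ℕ →₀ ℕ}
    (hd : Minimal (· ∈ leadingMonomials r (I : Set (MvPolynomial ℕ k))) d)
    (hdn : d ∈ leadingMonomials r ((I : Set (MvPolynomial ℕ k)) ∩ Sn k n))
    {g : MvPolynomial ℕ k} (hgI : g ∈ I) (hgn : g ∈ Sn k n) (hgd : g.coeff d = 1)
    (htail : ∀ s ∈ g.support, s ≠ d → s ∉ leadingMonomials r (I : Set (MvPolynomial ℕ k))) :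
    g ∈ G ∧ IsLM r g d := by
  rw [← image_val_interIdeal] at hdn
  obtain ⟨u, hu, l, hul, hld⟩ := exists_isLM_le_of_isGroebnerBasisIn hG.1 hdn
  have huI := mem_inter_of_isGroebnerBasisIn hG.1 hu
  obtain rfl : l = d := le_antisymm hld (hd.2 ⟨u, huI.1, hul⟩ hld)
  obtain ⟨l', hul', hu1⟩ := hG.2.1 u hu
  obtain rfl := hr.isLM_unique hul' hul
  suffices g = u by subst this; exact ⟨hu, hul⟩
  refine eq_of_sub_mem_of_coeff_eq hr (J := Subtype.val '' (interIdeal I n : Set (Sn k n)))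
    ?_ (hgd.trans hu1.symm) ?_ (fun s hs hsd => notMem_leadingMonomials_of_isReducedGBIn hr hG hu
      hul hs hsd)
  · rw [image_val_interIdeal]
    exact ⟨I.sub_mem hgI huI.1, sub_mem hgn huI.2⟩
  · rw [image_val_interIdeal]
    exact fun s hs hsd hsI => htail s hs hsd (leadingMonomials_mono Set.inter_subset_left hsI)

theorem exists_eventually_mem_isLM_le (hr : IsMonomialOrder r) {I : Ideal (MvPolynomial ℕ k)}
    {Gn : ℕ → Set (MvPolynomial ℕ k)}
    (hGn : ∀ᶠ n in atTop, IsReducedGBIn r n (Gn n) (interIdeal I n)) {m : ℕ →₀ ℕ}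
    (hm : m ∈ leadingMonomials r (I : Set (MvPolynomial ℕ k))) :
    ∃ g, (∀ᶠ n in atTop, g ∈ Gn n) ∧ ∃ d, IsLM r g d ∧ d ≤ m := by
  obtain ⟨d, hdm, hd⟩ := exists_minimal_le_of_wellFoundedLT _ m hm
  obtain ⟨g, hgI, hgd, htail⟩ := exists_coeff_eq_one_forall_notMem hr I hd.prop
  obtain ⟨f, hfI, hfd⟩ := hd.prop
  have key : ∀ᶠ n in atTop, g ∈ Gn n ∧ IsLM r g d :=
    (hGn.and ((eventually_mem_Sn f).and (eventually_mem_Sn g))).mono fun _ ⟨hG, hfn, hgn⟩ =>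
      mem_and_isLM_of_isReducedGBIn hr hG hd ⟨f, ⟨hfI, hfn⟩, hfd⟩ hgI hgn hgd htail
  obtain ⟨_, -, hgd'⟩ := key.exists
  exact ⟨g, key.mono fun _ => And.left, d, hgd', hdm⟩

end GroebnerBasesInFirstVariables

theorem reducedGB_union_inter_general {k : Type*} [Field k]
    (r : (ℕ →₀ ℕ) → (ℕ →₀ ℕ) → Prop) (hr : IsMonomialOrder r)
    (I : Ideal (MvPolynomial ℕ k))
    (Gn : ℕ → Set (MvPolynomial ℕ k))
    (hGn : ∀ n : ℕ, 1 ≤ n → IsReducedGBIn r n (Gn n) (interIdeal I n)) :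
    IsReducedGB r (⋃ m : ℕ, ⋃ (_ : 1 ≤ m), ⋂ n : ℕ, ⋂ (_ : m ≤ n), Gn n) I := by
  have hGn' : ∀ᶠ n in atTop, IsReducedGBIn r n (Gn n) (interIdeal I n) :=
    eventually_atTop.2 ⟨1, hGn⟩
  have hmem (g : MvPolynomial ℕ k) := Set.mem_iUnion_iInter_iff_eventually (G := Gn) (x := g)
  refine ⟨isGroebnerBasis_of_forall_exists_le (fun g hg => ?_) (fun m hm => ?_),
    fun g hg => ?_, fun g hg h hh => ?_⟩
  · obtain ⟨n, hG, hgn⟩ := (hGn'.and ((hmem g).1 hg)).exists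
    exact (mem_inter_of_isGroebnerBasisIn hG.1 hgn).1
  · obtain ⟨g, hg, hgm⟩ := exists_eventually_mem_isLM_le hr hGn' hm
    exact ⟨g, (hmem g).2 hg, hgm⟩
  · obtain ⟨n, hG, hgn⟩ := (hGn'.and ((hmem g).1 hg)).exists
    exact hG.2.1 g hgn
  · obtain ⟨n, hG, hgn, hhn⟩ := (hGn'.and (((hmem g).1 hg).and ((hmem h).1 hh))).exists
    exact hG.2.2 g hgn h hhn

/-- Theorem 1.12: if `Gₙ` is the reduced Gröbner base for `I ∩ S⟨n⟩` inside `S⟨n⟩` for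
each `n ≥ 1`, then `Ḡ = ⋃_{m ≥ 1} ⋂_{n ≥ m} Gₙ` is the reduced Gröbner base for `I`. -/
theorem reducedGB_union_inter {k : Type*} [Field k]
    (r : (ℕ →₀ ℕ) → (ℕ →₀ ℕ) → Prop) (hr : IsMonomialOrder r)
    (I : Ideal (MvPolynomial ℕ k)) (hI : I ≠ ⊥)
    (Gn : ℕ → Set (MvPolynomial ℕ k))
    (hGn : ∀ n : ℕ, 1 ≤ n → IsReducedGBIn r n (Gn n) (interIdeal I n)) :
    IsReducedGB r (⋃ m : ℕ, ⋃ (_ : 1 ≤ m), ⋂ n : ℕ, ⋂ (_ : m ≤ n), Gn n) I :=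
  reducedGB_union_inter_general r hr I Gn hGn
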